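/- arXiv:1110.0815 — 4 statements merged into one kernel-verified Lean document; each statement's English description precedes it below -/
import Mathlib

section
/- Let G be a simplicial group with Moore complex NG_n = ⋂_{i=1}^{n} ker ∂_i. For n ≥ 0 let S(n) denote the set of all subsets α ⊆ {0,1,…,n−1}, ordered lexicographically (with α = {i_r > … > i_1} written in decreasing order, and S(n) ordered as ∅ < {0} < {1} < {1,0} < {2} < …), and for α = {i_r > … > i_1} write s_α = s_{i_r} ∘ ⋯ ∘ s_{i_1} (with s_∅ = id). Then the map ∏_{α ∈ S(n)} NG_{n−#α} → G_n sending (x_α)_{α ∈ S(n)} to the product ∏_{α ∈ S(n)} s_α(x_α), taken in the lexicographic order of S(n), is a bijection; i.e., every g ∈ G_n has a unique such factorization, realizing the iterated semidirect product decomposition G_n ≅ (…(NG_n ⋊ s_0 NG_{n-1}) ⋊ … ⋊ s_{n-1}⋯s_0 NG_0). -/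
/-!
Write `K_k ⊆ G_n` for `⋂_{k < i ≤ n} ker ∂ᵢ`, so that `K_0 = NG_n` and `K_n = G_n`. For
`g ∈ K_{k+1}(G_n)`, the face `∂_{k+1} g` lies in `K_k(G_{n-1})` and `g (s_k ∂_{k+1} g)⁻¹` lies in
`K_k(G_n)`; since `∂_{k+1} s_k = id` and `∂_{k+1}` kills `K_k(G_n)`, the factorization
`g = p · s_k h` with `p ∈ K_k(G_n)` is unique, i.e. `K_{k+1}(G_n) = K_k(G_n) ⋊ s_k K_k(G_{n-1})`.
By induction on `k`, every element of `K_k(G_n)` is then uniquely a product `∏ s_α(x_α)` over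
`α ⊆ {0, …, k-1}` in lexicographic order: the subsets without `k` come first, and those with `k`
contribute `s_k` of the factorization one level down, as `s_k s_β = s_{β ∪ {k}}`.
-/

/-- The underlying family of groups of a simplicial group. -/
structure PreSimplicialGroup where
  G : ℕ → Type
  grp : ∀ n, Group (G n)

attribute [instance] PreSimplicialGroup.grp

/-- A simplicial group: a family of groups `G n` together with face homomorphisms
`d n i : G (n+1) →* G n` (for `i ≤ n+1`) and degeneracy homomorphisms
`s n i : G n →* G (n+1)` (for `i ≤ n`) satisfying the simplicial identities. -/
structure SimplicialGroup extends PreSimplicialGroup where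
  d : ∀ n : ℕ, ℕ → (G (n+1) →* G n)
  s : ∀ n : ℕ, ℕ → (G n →* G (n+1))
  dd : ∀ (n i j : ℕ), i ≤ j → j ≤ n + 1 →
    (d n i).comp (d (n+1) (j+1)) = (d n j).comp (d (n+1) i)
  ss : ∀ (n i j : ℕ), i ≤ j → j ≤ n →
    (s (n+1) i).comp (s n j) = (s (n+1) (j+1)).comp (s n i)
  ds_lt : ∀ (n i j : ℕ), i ≤ j → j ≤ n →
    (d (n+1) i).comp (s (n+1) (j+1)) = (s n j).comp (d n i)
  ds_self : ∀ (n j : ℕ), j ≤ n → (d n j).comp (s n j) = MonoidHom.id (G n)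
  ds_succ : ∀ (n j : ℕ), j ≤ n → (d n (j+1)).comp (s n j) = MonoidHom.id (G n)
  ds_gt : ∀ (n i j : ℕ), j < i → i ≤ n + 1 →
    (d (n+1) (i+1)).comp (s (n+1) j) = (s n j).comp (d n i)

/-- The Moore complex: `N X n = ⋂_{i=1}^{n} ker ∂ᵢ` as a subgroup of `X.G n`,
with `N X 0 = X.G 0`. -/
def SimplicialGroup.N (X : SimplicialGroup) : (n : ℕ) → Subgroup (X.G n)
  | 0 => ⊤
  | (n+1) => ⨅ i ∈ Finset.Icc 1 (n+1), (X.d n i).ker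

/-- Transport along an equality of levels, as a group homomorphism. -/
def SimplicialGroup.castHom (X : SimplicialGroup) {a b : ℕ} (h : a = b) :
    X.G a →* X.G b where
  toFun g := h ▸ g
  map_one' := by subst h; rfl
  map_mul' := by subst h; intros; rfl

/-- The composite degeneracy `s_{i_r} ∘ ⋯ ∘ s_{i_1}` associated to a list
`l = [i_r, …, i_1]` of degeneracy indices (leftmost applied last), starting at level `m`. -/
def SimplicialGroup.sComp (X : SimplicialGroup) : (l : List ℕ) → (m : ℕ) →
    (X.G m →* X.G (m + l.length))
  | [], m => MonoidHom.id (X.G m)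
  | i :: t, m => (X.s (m + t.length) i).comp (X.sComp t m)

/-- The composite degeneracy `s_α : G_{n - #α} →* G_n` associated to a finite set
`α` of degeneracy indices, `s_α = s_{i_r} ∘ ⋯ ∘ s_{i_1}` for `α = {i_r > … > i_1}`. -/
def SimplicialGroup.sFinset (X : SimplicialGroup) (n : ℕ) (A : Finset ℕ)
    (h : A.card ≤ n) : X.G (n - A.card) →* X.G n :=
  (X.castHom (show (n - A.card) + ((A.sort (· ≤ ·)).reverse).length = n by
      simp only [List.length_reverse, Finset.length_sort]; omega)).comp
    (X.sComp ((A.sort (· ≤ ·)).reverse) (n - A.card))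

/-- The subset of `{0, …, n-1}` encoded by the binary expansion of `m`; the natural
order on codes `m` is exactly the lexicographic order on the subsets
`α = {i_r > … > i_1}` (∅ < {0} < {1} < {1,0} < {2} < …). -/
def bitSet (n m : ℕ) : Finset ℕ := (Finset.range n).filter (fun i => Nat.testBit m i)

theorem bitSet_card_le (n m : ℕ) : (bitSet n m).card ≤ n :=
  (Finset.card_filter_le _ _).trans (le_of_eq (Finset.card_range n))

lemma existsUnique_prod_and {α β : Type*} {p : α → Prop} {q : β → Prop} (hp : ∃! a, p a)
    (hq : ∃! b, q b) : ∃! c : α × β, p c.1 ∧ q c.2 := by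
  obtain ⟨a, ha, ha'⟩ := hp
  obtain ⟨b, hb, hb'⟩ := hq
  exact ⟨(a, b), ⟨ha, hb⟩, fun c hc => Prod.ext (ha' _ hc.1) (hb' _ hc.2)⟩

lemma List.prod_map_finRange_add {M : Type*} [Monoid M] {a b N : ℕ} (h : a + b = N)
    (f : Fin N → M) :
    ((List.finRange N).map f).prod =
      ((List.finRange a).map fun i => f (finSumFinEquiv.trans (finCongr h) (.inl i))).prod *
      ((List.finRange b).map fun i => f (finSumFinEquiv.trans (finCongr h) (.inr i))).prod := by
  subst h
  simp only [← List.ofFn_eq_map, List.ofFn_add, List.prod_append]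
  rfl

lemma MonoidHom.eq_mul_map_iff {G Q : Type*} [Group G] [Group Q] {d : G →* Q} {s : Q →* G}
    (hds : d.comp s = MonoidHom.id Q) {g p : G} (hp : d p = 1) (q : Q) :
    g = p * s q ↔ g * (s (d g))⁻¹ = p ∧ d g = q := by
  have hdsq (q : Q) : d (s q) = q := DFunLike.congr_fun hds q
  constructor
  · rintro rfl
    simp [hp, hdsq]
  · rintro ⟨rfl, rfl⟩
    group

lemma Finset.sort_insert_eq_concat {α : Type*} [LinearOrder α] {k : α} {B : Finset α}
    (hB : ∀ j ∈ B, j < k) :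
    (insert k B).sort (· ≤ ·) = B.sort (· ≤ ·) ++ [k] := by
  have hk : k ∉ B := fun h => (hB k h).false
  refine List.Perm.eq_of_pairwise' (Finset.pairwise_sort _ _) ?_ ?_
  · exact List.pairwise_append.2 ⟨Finset.pairwise_sort _ _, List.pairwise_singleton _ _,
      fun a ha b hb => (List.mem_singleton.1 hb) ▸ (hB a ((Finset.mem_sort _).1 ha)).le⟩
  · refine (Finset.sort_perm_toList _ _).trans ?_
    refine (Finset.toList_insert hk).trans ?_
    exact ((Finset.sort_perm_toList _ _).symm.cons k).trans (List.perm_append_singleton k _).symm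

lemma bitSet_zero_right (n : ℕ) : bitSet n 0 = ∅ := by
  simp [bitSet]

lemma lt_of_mem_bitSet {n m k j : ℕ} (hm : m < 2 ^ k) (hj : j ∈ bitSet n m) : j < k := by
  by_contra! hkj
  simp only [bitSet, Finset.mem_filter] at hj
  rw [Nat.testBit_lt_two_pow (hm.trans_le (Nat.pow_le_pow_right two_pos hkj))] at hj
  exact Bool.false_ne_true hj.2

lemma bitSet_succ_of_lt {n m : ℕ} (hm : m < 2 ^ n) : bitSet (n + 1) m = bitSet n m := by
  rw [bitSet, Finset.range_add_one, Finset.filter_insert,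
    if_neg (by simp [Nat.testBit_lt_two_pow hm])]
  rfl

lemma bitSet_two_pow_add {n m k : ℕ} (hk : k < n) (hm : m < 2 ^ k) :
    bitSet n (2 ^ k + m) = insert k (bitSet n m) := by
  ext j
  simp only [bitSet, Finset.mem_filter, Finset.mem_range, Finset.mem_insert]
  rcases lt_trichotomy j k with hjk | rfl | hkj
  · simp [Nat.testBit_two_pow_add_gt hjk, hjk.ne]
  · simp [Nat.testBit_two_pow_add_eq, Nat.testBit_lt_two_pow hm, hk]
  · have hlt : 2 ^ k + m < 2 ^ j :=
      calc 2 ^ k + m < 2 ^ (k + 1) := by rw [Nat.two_pow_succ]; omega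
        _ ≤ 2 ^ j := Nat.pow_le_pow_right two_pos hkj
    simp [Nat.testBit_lt_two_pow hlt, hkj.ne',
      Nat.testBit_lt_two_pow (show m < 2 ^ j by omega)]

lemma bitSet_succ_two_pow_add {n m k : ℕ} (hk : k ≤ n) (hm : m < 2 ^ k) :
    bitSet (n + 1) (2 ^ k + m) = insert k (bitSet n m) := by
  rw [bitSet_two_pow_add (Nat.lt_succ_of_le hk) hm,
    bitSet_succ_of_lt (hm.trans_le (Nat.pow_le_pow_right two_pos hk))]

lemma card_bitSet_succ_two_pow_add {n m k : ℕ} (hk : k ≤ n) (hm : m < 2 ^ k) :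
    n + 1 - (bitSet (n + 1) (2 ^ k + m)).card = n - (bitSet n m).card := by
  rw [bitSet_succ_two_pow_add hk hm,
    Finset.card_insert_of_notMem fun h => (lt_of_mem_bitSet hm h).false]
  have := bitSet_card_le n m
  omega

namespace SimplicialGroup

variable {X : SimplicialGroup}

variable (X) in
def kerFacesAbove (k : ℕ) : (n : ℕ) → Subgroup (X.G n)
  | 0 => ⊤
  | n + 1 => ⨅ i ∈ Finset.Icc (k + 1) (n + 1), (X.d n i).ker

lemma mem_kerFacesAbove_succ {k n : ℕ} {g : X.G (n + 1)} :
    g ∈ X.kerFacesAbove k (n + 1) ↔ ∀ i, k < i → i ≤ n + 1 → X.d n i g = 1 := by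
  simp [kerFacesAbove, Subgroup.mem_iInf]

lemma kerFacesAbove_zero (n : ℕ) : X.kerFacesAbove 0 n = X.N n := by
  cases n <;> rfl

lemma kerFacesAbove_self (n : ℕ) : X.kerFacesAbove n n = ⊤ := by
  cases n with
  | zero => rfl
  | succ n => exact eq_top_iff.2 fun g _ => mem_kerFacesAbove_succ.2 fun i hi hin => by omega

lemma kerFacesAbove_mono {k k' : ℕ} (h : k ≤ k') (n : ℕ) :
    X.kerFacesAbove k n ≤ X.kerFacesAbove k' n := by
  cases n with
  | zero => exact le_rfl
  | succ n =>
    intro g hg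
    exact mem_kerFacesAbove_succ.2 fun i hi hin => mem_kerFacesAbove_succ.1 hg i (by omega) hin

lemma mem_kerFacesAbove_iff_d_eq_one {k n : ℕ} (hk : k ≤ n) {g : X.G (n + 1)} :
    g ∈ X.kerFacesAbove k (n + 1) ↔
      g ∈ X.kerFacesAbove (k + 1) (n + 1) ∧ X.d n (k + 1) g = 1 := by
  simp only [mem_kerFacesAbove_succ]
  refine ⟨fun h => ⟨fun i hi hin => h i (by omega) hin, h _ k.lt_succ_self (by omega)⟩,
    fun ⟨h, hk⟩ i hi hin => ?_⟩
  rcases (Nat.succ_le_of_lt hi).eq_or_lt with rfl | hi'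
  · exact hk
  · exact h i hi' hin

lemma castHom_mem_kerFacesAbove {k a b : ℕ} (h : a = b) {g : X.G a}
    (hg : g ∈ X.kerFacesAbove k a) : X.castHom h g ∈ X.kerFacesAbove k b := by
  subst h
  exact hg

/-- By `∂_{i+1} s_j = s_j ∂_i` for `j < i`. -/
lemma s_mem_kerFacesAbove {j K n : ℕ} (hj : j < K) {y : X.G n}
    (hy : y ∈ X.kerFacesAbove j n) : X.s n j y ∈ X.kerFacesAbove K (n + 1) := by
  refine mem_kerFacesAbove_succ.2 fun i hi hin => ?_
  obtain ⟨i, rfl⟩ : ∃ i', i = i' + 1 := ⟨i - 1, by omega⟩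
  obtain ⟨n, rfl⟩ : ∃ n', n = n' + 1 := ⟨n - 1, by omega⟩
  rw [← MonoidHom.comp_apply, X.ds_gt n i j (by omega) (by omega), MonoidHom.comp_apply,
    mem_kerFacesAbove_succ.1 hy i (by omega) (by omega), map_one]

lemma d_mem_kerFacesAbove {k n : ℕ} {g : X.G (n + 1)}
    (hg : g ∈ X.kerFacesAbove (k + 1) (n + 1)) : X.d n (k + 1) g ∈ X.kerFacesAbove k n := by
  cases n with
  | zero => trivial
  | succ n =>
    refine mem_kerFacesAbove_succ.2 fun i hi hin => ?_
    rw [← MonoidHom.comp_apply, ← X.dd n (k + 1) i hi hin, MonoidHom.comp_apply,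
      mem_kerFacesAbove_succ.1 hg (i + 1) (by omega) (by omega), map_one]

lemma mul_inv_s_d_mem_kerFacesAbove {k n : ℕ} (hk : k ≤ n) {g : X.G (n + 1)}
    (hg : g ∈ X.kerFacesAbove (k + 1) (n + 1)) :
    g * (X.s n k (X.d n (k + 1) g))⁻¹ ∈ X.kerFacesAbove k (n + 1) := by
  refine (mem_kerFacesAbove_iff_d_eq_one hk).2 ⟨mul_mem hg (inv_mem ?_), ?_⟩
  · exact s_mem_kerFacesAbove k.lt_succ_self (d_mem_kerFacesAbove hg)
  · rw [map_mul, map_inv, ← MonoidHom.comp_apply _ (X.s n k), X.ds_succ n k hk,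
      MonoidHom.id_apply, mul_inv_cancel]

lemma castHom_castHom {a b c : ℕ} (h : a = b) (h' : b = c) (w : X.G a) :
    X.castHom h' (X.castHom h w) = X.castHom (h.trans h') w := by
  subst h h'
  rfl

lemma castHom_s {a b : ℕ} (k : ℕ) (h : a + 1 = b + 1) (h' : a = b) (w : X.G a) :
    X.castHom h (X.s a k w) = X.s b k (X.castHom h' w) := by
  subst h'
  rfl

lemma sComp_castHom (l : List ℕ) {a b : ℕ} (h : a = b) (w : X.G a) :
    X.sComp l b (X.castHom h w) = X.castHom (by rw [h]) (X.sComp l a w) := by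
  subst h
  rfl

lemma sFinset_eq_castHom_sComp {n : ℕ} {A : Finset ℕ} (hA : A.card ≤ n) {l : List ℕ}
    (hl : (A.sort (· ≤ ·)).reverse = l) (w : X.G (n - A.card)) :
    X.sFinset n A hA w = X.castHom (by subst hl; simp; omega) (X.sComp l (n - A.card) w) := by
  subst hl
  rfl

lemma sFinset_of_eq_empty {n : ℕ} {A : Finset ℕ} (hA : A.card ≤ n) (h : A = ∅)
    (w : X.G (n - A.card)) : X.sFinset n A hA w = X.castHom (by simp [h]) w := by
  rw [sFinset_eq_castHom_sComp hA (l := []) (by simp [h])]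
  rfl

lemma sFinset_of_eq_insert {n k : ℕ} {A B : Finset ℕ} (hAB : A = insert k B)
    (hB : ∀ j ∈ B, j < k) (hA : A.card ≤ n + 1) (hBn : B.card ≤ n)
    (w : X.G (n + 1 - A.card)) :
    X.sFinset (n + 1) A hA w =
      X.s n k (X.sFinset n B hBn (X.castHom (by
        rw [hAB, Finset.card_insert_of_notMem fun h => (hB k h).false]; omega) w)) := by
  have hl : (A.sort (· ≤ ·)).reverse = k :: (B.sort (· ≤ ·)).reverse := by
    simp [hAB, Finset.sort_insert_eq_concat hB]
  rw [sFinset_eq_castHom_sComp hA hl, sFinset_eq_castHom_sComp hBn rfl, sComp_castHom]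
  dsimp only [sComp, MonoidHom.comp_apply]
  rw [castHom_castHom]
  exact castHom_s k _ _ _

lemma sComp_mem_kerFacesAbove {m K : ℕ} {x : X.G m} (hx : x ∈ X.N m) :
    ∀ {l : List ℕ}, l.Pairwise (· > ·) → (∀ j ∈ l, j < K) →
      X.sComp l m x ∈ X.kerFacesAbove K (m + l.length)
  | [], _, _ => kerFacesAbove_mono K.zero_le m ((kerFacesAbove_zero m).symm ▸ hx)
  | j :: _, hl, hK =>
    s_mem_kerFacesAbove (hK j List.mem_cons_self)
      (sComp_mem_kerFacesAbove hx hl.of_cons fun _ hi => List.rel_of_pairwise_cons hl hi)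

lemma sFinset_mem_kerFacesAbove {n K : ℕ} {A : Finset ℕ} (hAK : ∀ j ∈ A, j < K)
    (hA : A.card ≤ n) {x : X.G (n - A.card)} (hx : x ∈ X.N (n - A.card)) :
    X.sFinset n A hA x ∈ X.kerFacesAbove K n :=
  castHom_mem_kerFacesAbove _ <| sComp_mem_kerFacesAbove hx
    (List.pairwise_reverse.2 (Finset.sortedLT_sort A).pairwise)
    fun j hj => hAK j ((Finset.mem_sort _).1 (List.mem_reverse.1 hj))

variable (X) in
/-- Families indexed by the codes `m < 2 ^ k`, i.e. by the subsets of `{0, …, k-1}`. Using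
`bitSet n m` (equal to `bitSet k m`) makes `MooreFamily n n` literally the type in the theorem. -/
def MooreFamily (k n : ℕ) : Type :=
  (m : Fin (2 ^ k)) → X.N (n - (bitSet n m.val).card)

def mooreProd {k n : ℕ} (x : X.MooreFamily k n) : X.G n :=
  ((List.finRange (2 ^ k)).map fun m =>
    X.sFinset n (bitSet n m.val) (bitSet_card_le n m.val) (x m)).prod

lemma mooreProd_mem {k n : ℕ} (x : X.MooreFamily k n) : X.mooreProd x ∈ X.kerFacesAbove k n :=
  Subgroup.list_prod_mem _ fun _ hy => by
    obtain ⟨m, -, rfl⟩ := List.mem_map.1 hy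
    exact sFinset_mem_kerFacesAbove (fun _ hj => lt_of_mem_bitSet m.isLt hj) _ (x m).2

lemma coe_cast_N {a b : ℕ} (h : a = b) (y : X.N a) :
    (Equiv.cast (congrArg (fun c => ↥(X.N c)) h) y : X.G b) = X.castHom h y := by
  subst h
  rfl

/-- The code `m < 2 ^ k` stands for `α` and `2 ^ k + m` for `α ∪ {k}`: the lower half of the
family stays at level `n + 1`, the upper half moves down to level `n`. -/
def splitMooreFamily {k n : ℕ} (hk : k ≤ n) :
    X.MooreFamily (k + 1) (n + 1) ≃ X.MooreFamily k (n + 1) × X.MooreFamily k n :=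
  (Equiv.piCongrLeft _ (finSumFinEquiv.trans (finCongr (Nat.two_pow_succ k).symm))).symm.trans <|
    (Equiv.sumPiEquivProdPi _).trans <| (Equiv.refl _).prodCongr <| Equiv.piCongrRight fun m =>
      Equiv.cast (congrArg (fun c => ↥(X.N c)) (card_bitSet_succ_two_pow_add hk m.isLt))

lemma mooreProd_eq_mul {k n : ℕ} (hk : k ≤ n) (x : X.MooreFamily (k + 1) (n + 1)) :
    X.mooreProd x = X.mooreProd (splitMooreFamily hk x).1 *
      X.s n k (X.mooreProd (splitMooreFamily hk x).2) := by
  rw [mooreProd, List.prod_map_finRange_add (Nat.two_pow_succ k).symm]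
  congr 1
  rw [mooreProd, map_list_prod, List.map_map]
  congr 1
  refine List.map_congr_left fun m _ => ?_
  rw [Function.comp_apply]
  refine (sFinset_of_eq_insert (bitSet_succ_two_pow_add hk m.isLt)
    (fun _ hj => lt_of_mem_bitSet m.isLt hj) _ (bitSet_card_le n m) _).trans ?_
  congr 2
  exact (coe_cast_N _ _).symm

lemma existsUnique_mooreProd_zero {n : ℕ} {g : X.G n} (hg : g ∈ X.N n) :
    ∃! x : X.MooreFamily 0 n, g = X.mooreProd x := by
  have hlevel : n - (bitSet n (0 : Fin (2 ^ 0))).card = n := by simp [bitSet_zero_right]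
  let _ : Unique (Fin (2 ^ 0)) := inferInstanceAs (Unique (Fin 1))
  let e : X.MooreFamily 0 n ≃ X.N n :=
    (Equiv.piUnique fun m : Fin (2 ^ 0) => ↥(X.N (n - (bitSet n m.val).card))).trans
      (Equiv.cast (congrArg (fun c => ↥(X.N c)) hlevel))
  have he (x : X.MooreFamily 0 n) : X.mooreProd x = e x := by
    rw [show (e x : X.G n) = X.castHom hlevel (x 0) from coe_cast_N hlevel (x 0)]
    simp only [mooreProd, show List.finRange (2 ^ 0) = [0] from rfl, List.map_cons, List.map_nil,
      List.prod_singleton]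
    exact sFinset_of_eq_empty _ (bitSet_zero_right n) _
  refine (e.existsUnique_congr (q := fun y : X.N n => g = y) fun x => by rw [he]).2
    ⟨⟨g, hg⟩, rfl, fun y hy => Subtype.ext hy.symm⟩

lemma existsUnique_mooreProd (k : ℕ) :
    ∀ {n : ℕ}, k ≤ n → ∀ {g : X.G n}, g ∈ X.kerFacesAbove k n →
      ∃! x : X.MooreFamily k n, g = X.mooreProd x := by
  induction k with
  | zero => exact fun {n} _ _ hg => existsUnique_mooreProd_zero (kerFacesAbove_zero n ▸ hg)
  | succ k ih =>
    intro n hkn g hg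
    obtain ⟨n, rfl⟩ : ∃ n', n = n' + 1 := ⟨n - 1, by omega⟩
    have hk : k ≤ n := by omega
    refine ((splitMooreFamily hk).existsUnique_congr
      (q := fun p => g = X.mooreProd p.1 * X.s n k (X.mooreProd p.2))
      fun x => by rw [mooreProd_eq_mul hk]).2 ?_
    refine (existsUnique_congr fun p : X.MooreFamily k (n + 1) × X.MooreFamily k n =>
      MonoidHom.eq_mul_map_iff (X.ds_succ n k hk)
        ((mem_kerFacesAbove_iff_d_eq_one hk).1 (mooreProd_mem p.1)).2 _).2 ?_
    exact existsUnique_prod_and (ih (by omega) (mul_inv_s_d_mem_kerFacesAbove hk hg))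
      (ih hk (d_mem_kerFacesAbove hg))

end SimplicialGroup

/-- every `g ∈ G_n` admits a unique factorization
`g = ∏_{α ∈ S(n)} s_α (x_α)` with `x_α ∈ NG_{n - #α}`, the product being taken in the
lexicographic order on the set `S(n)` of subsets of `{0,…,n-1}` (realized here by the
binary codes `m ∈ Fin (2^n)` in increasing order, `α = bitSet n m`). This realizes the
iterated semidirect product decomposition
`G_n ≅ (…(NG_n ⋊ s₀NG_{n-1}) ⋊ … ⋊ s_{n-1}⋯s₀NG_0)`. -/
theorem moore_semidirect_decomposition (X : SimplicialGroup) (n : ℕ) (g : X.G n) :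
    ∃! x : (m : Fin (2^n)) →
        {y : X.G (n - (bitSet n m.val).card) // y ∈ X.N (n - (bitSet n m.val).card)},
      g = ((List.finRange (2^n)).map (fun m =>
        X.sFinset n (bitSet n m.val) (bitSet_card_le n m.val) (x m).val)).prod :=
  X.existsUnique_mooreProd n le_rfl (X.kerFacesAbove_self n ▸ Subgroup.mem_top g)
end

section
/- Let G be a simplicial group with Moore complex NG_n = ⋂_{i=1}^{n} ker ∂_i. For g ∈ G_n define p_n^i(g) = g · s_{i-1}(∂_i g)^{-1} and p_n = p_n^1 ∘ p_n^2 ∘ ⋯ ∘ p_n^n (so p_n^n is applied first). Then p_n is a projection onto NG_n: for every g ∈ G_n one has p_n(g) ∈ NG_n, and for every g ∈ NG_n one has p_n(g) = g. Consequently, for any composed degeneracies s_α, s_β and any g ∈ G whose images s_α(g), s_β(h) lie in G_n, the Peiffer element F_{α,β}(g,h) = p_n( s_α(g) s_β(h) s_α(g)^{-1} s_β(h)^{-1} ) lies in NG_n. -/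
/-- `p_n^{j+1} g = g · s_j(∂_{j+1} g)⁻¹` on `G_{n+1}`. -/
def SimplicialGroup.pAux (X : SimplicialGroup) (n j : ℕ) (g : X.G (n+1)) : X.G (n+1) :=
  g * (X.s n j (X.d n (j+1) g))⁻¹

/-- `pProj n k = p^1 ∘ p^2 ∘ ⋯ ∘ p^{k+1}` (rightmost applied first); in particular
`pProj n n` is the projection `p_{n+1} = p^1 ∘ ⋯ ∘ p^{n+1} : G_{n+1} → NG_{n+1}`. -/
def SimplicialGroup.pProj (X : SimplicialGroup) (n : ℕ) : ℕ → X.G (n+1) → X.G (n+1)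
  | 0, g => X.pAux n 0 g
  | (k+1), g => X.pProj n k (X.pAux n (k+1) g)

/-! `p^{j+1}` kills the face `∂_{j+1}`, and by `∂_i s_j = s_j ∂_{i-1}` and `∂_{j+1} ∂_i = ∂_{i-1} ∂_{j+1}`
(for `i > j+1`) it keeps every higher face that already vanishes trivial. Applying
`p^{n+1}, …, p^1` in this order therefore kills the faces `∂_{n+1}, …, ∂_1` one after the other
without reviving the ones already killed. On `NG` every `p^i` is the identity, and a Peiffer
element is a value of `p`. -/

namespace SimplicialGroup

variable (X : SimplicialGroup)

lemma mem_N_succ_iff {n : ℕ} {g : X.G (n+1)} :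
    g ∈ X.N (n+1) ↔ ∀ i, 1 ≤ i → i ≤ n+1 → X.d n i g = 1 := by
  simp only [N, Subgroup.mem_iInf, MonoidHom.mem_ker, Finset.mem_Icc]
  exact ⟨fun h i h1 h2 => h i ⟨h1, h2⟩, fun h i hi => h i hi.1 hi.2⟩

lemma pAux_eq_self {n j : ℕ} {g : X.G (n+1)} (hg : X.d n (j+1) g = 1) : X.pAux n j g = g := by
  rw [pAux, hg, map_one, inv_one, mul_one]

lemma d_pAux_self {n j : ℕ} (hj : j ≤ n) (g : X.G (n+1)) : X.d n (j+1) (X.pAux n j g) = 1 := by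
  have hds : X.d n (j+1) (X.s n j (X.d n (j+1) g)) = X.d n (j+1) g :=
    DFunLike.congr_fun (X.ds_succ n j hj) _
  rw [pAux, map_mul, map_inv, hds, mul_inv_cancel]

lemma d_pAux_of_lt {n j i : ℕ} (hji : j + 1 < i) (hi : i ≤ n + 1) {g : X.G (n+1)}
    (hg : X.d n i g = 1) : X.d n i (X.pAux n j g) = 1 := by
  obtain ⟨m, rfl⟩ : ∃ m, n = m + 1 := ⟨n - 1, by omega⟩
  obtain ⟨i, rfl⟩ : ∃ i', i = i' + 1 := ⟨i - 1, by omega⟩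
  have hds : X.d (m+1) (i+1) (X.s (m+1) j (X.d (m+1) (j+1) g))
      = X.s m j (X.d m i (X.d (m+1) (j+1) g)) :=
    DFunLike.congr_fun (X.ds_gt m i j (by omega) (by omega)) _
  have hdd : X.d m (j+1) (X.d (m+1) (i+1) g) = X.d m i (X.d (m+1) (j+1) g) :=
    DFunLike.congr_fun (X.dd m (j+1) i (by omega) (by omega)) g
  rw [pAux, map_mul, map_inv, hg, hds, ← hdd, hg, map_one, map_one, inv_one, mul_one]

lemma pProj_eq_self {n k : ℕ} {g : X.G (n+1)} (hg : ∀ j ≤ k, X.d n (j+1) g = 1) :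
    X.pProj n k g = g := by
  induction k with
  | zero => exact X.pAux_eq_self (hg 0 le_rfl)
  | succ k ih =>
    rw [pProj, X.pAux_eq_self (hg (k+1) le_rfl), ih fun j hj => hg j (by omega)]

lemma d_pProj_of_lt {n k i : ℕ} (hki : k + 1 < i) (hi : i ≤ n + 1) {g : X.G (n+1)}
    (hg : X.d n i g = 1) : X.d n i (X.pProj n k g) = 1 := by
  induction k generalizing g with
  | zero => exact X.d_pAux_of_lt hki hi hg
  | succ k ih => exact ih (by omega) (X.d_pAux_of_lt hki hi hg)

lemma d_pProj_eq_one {n k : ℕ} (hk : k ≤ n) (g : X.G (n+1)) {i : ℕ} (hi₁ : 1 ≤ i)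
    (hi : i ≤ k + 1) : X.d n i (X.pProj n k g) = 1 := by
  induction k generalizing g with
  | zero =>
    obtain rfl : i = 1 := by omega
    exact X.d_pAux_self (Nat.zero_le n) g
  | succ k ih =>
    rw [pProj]
    rcases Nat.lt_or_ge i (k+2) with hlt | hge
    · exact ih (by omega) _ (by omega)
    · obtain rfl : i = k + 2 := by omega
      exact X.d_pProj_of_lt (by omega) (by omega) (X.d_pAux_self hk g)

end SimplicialGroup

/-- `p_{n+1} = p^1 ∘ ⋯ ∘ p^{n+1}` (with `p^i g = g · s_{i-1}(∂_i g)⁻¹`) is a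
projection of `G_{n+1}` onto the Moore subgroup `NG_{n+1}`: it takes values in `NG_{n+1}`
and restricts to the identity on `NG_{n+1}`.  Consequently, for any composed degeneracies
`s_α`, `s_β` landing in `G_{n+1}`, the Peiffer element
`F_{α,β}(g,h) = p_{n+1}(s_α(g) s_β(h) s_α(g)⁻¹ s_β(h)⁻¹)` lies in `NG_{n+1}`. -/
theorem moore_projection_and_peiffer (X : SimplicialGroup) (n : ℕ) :
    (∀ g : X.G (n+1), X.pProj n n g ∈ X.N (n+1)) ∧
    (∀ g ∈ X.N (n+1), X.pProj n n g = g) ∧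
    (∀ (la lb : List ℕ) (ma mb : ℕ) (ha : ma + la.length = n+1)
        (hb : mb + lb.length = n+1) (ga : X.G ma) (gb : X.G mb),
      X.pProj n n
        (X.castHom ha (X.sComp la ma ga) * X.castHom hb (X.sComp lb mb gb) *
          (X.castHom ha (X.sComp la ma ga))⁻¹ * (X.castHom hb (X.sComp lb mb gb))⁻¹)
        ∈ X.N (n+1)) := by
  have mem_N : ∀ g : X.G (n+1), X.pProj n n g ∈ X.N (n+1) := fun g =>
    X.mem_N_succ_iff.2 fun _ hi₁ hi => X.d_pProj_eq_one le_rfl g hi₁ hi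
  refine ⟨mem_N, fun g hg => ?_, fun _ _ _ _ _ _ _ _ => mem_N _⟩
  exact X.pProj_eq_self fun j _ => X.mem_N_succ_iff.1 hg (j+1) (by omega) (by omega)
end

section
/- Let G be a simplicial group whose Moore complex has length 1, i.e. NG_2 = ⋂_{i=1}^{2} ker ∂_i is the trivial subgroup of G_2. Then the data (NG_1, G_0, δ_1, action) is a crossed module of groups, where δ_1 : NG_1 → G_0 is the restriction of ∂_0 and G_0 acts on NG_1 by ^{g}h = s_0(g) h s_0(g)^{-1}. In particular the Peiffer identity holds: for all h, h' ∈ NG_1 = ker ∂_1, s_0(∂_0 h) · h' · s_0(∂_0 h)^{-1} = h h' h^{-1}, and equivariance holds: ∂_0( s_0(g) h s_0(g)^{-1} ) = g (∂_0 h) g^{-1} for all g ∈ G_0, h ∈ NG_1. -/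
namespace SimplicialGroup

variable (X : SimplicialGroup)

@[simp]
theorem d_s_self {n j : ℕ} (hj : j ≤ n) (x : X.G n) : X.d n j (X.s n j x) = x :=
  DFunLike.congr_fun (X.ds_self n j hj) x

@[simp]
theorem d_succ_s_self {n j : ℕ} (hj : j ≤ n) (x : X.G n) : X.d n (j + 1) (X.s n j x) = x :=
  DFunLike.congr_fun (X.ds_succ n j hj) x

theorem d_s_succ_of_le {n i j : ℕ} (hij : i ≤ j) (hj : j ≤ n) (x : X.G (n + 1)) :
    X.d (n + 1) i (X.s (n + 1) (j + 1) x) = X.s n j (X.d n i x) :=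
  DFunLike.congr_fun (X.ds_lt n i j hij hj) x

theorem d_succ_s_of_lt {n i j : ℕ} (hji : j < i) (hi : i ≤ n + 1) (x : X.G (n + 1)) :
    X.d (n + 1) (i + 1) (X.s (n + 1) j x) = X.s n j (X.d n i x) :=
  DFunLike.congr_fun (X.ds_gt n i j hji hi) x

instance N_normal : ∀ n, (X.N n).Normal
  | 0 => Subgroup.normal_top
  | _ + 1 => Subgroup.normal_iInf_normal fun _ => Subgroup.normal_iInf_normal fun _ => inferInstance

theorem mem_N_one {x : X.G 1} : x ∈ X.N 1 ↔ X.d 0 1 x = 1 := by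
  simp [N]

theorem N_two_eq : X.N 2 = (X.d 1 1).ker ⊓ (X.d 1 2).ker := by
  ext x
  simp only [N, Subgroup.mem_iInf, Subgroup.mem_inf, Finset.mem_Icc, MonoidHom.mem_ker]
  constructor
  · intro hx
    exact ⟨hx 1 (by norm_num), hx 2 (by norm_num)⟩
  · rintro ⟨hx₁, hx₂⟩ i ⟨hi₁, hi₂⟩
    interval_cases i <;> assumption

/-- `⁅ker ∂₁, ker ∂₂⁆ ≤ ker ∂₁ ⊓ ker ∂₂ = N₂`, so trivial `N₂` makes the two kernels commute. -/
theorem commute_of_N_two_eq_bot (hN : X.N 2 = ⊥) {x y : X.G 2}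
    (hx : X.d 1 1 x = 1) (hy : X.d 1 2 y = 1) : Commute x y := by
  have hdisj : Disjoint (X.d 1 1).ker (X.d 1 2).ker := by
    rw [disjoint_iff, ← N_two_eq, hN]
  have hle := Subgroup.commutator_eq_bot_iff_le_centralizer.mp
    (Subgroup.commutator_eq_bot_of_disjoint hdisj)
  exact (Subgroup.mem_centralizer_iff.mp (hle hx) y hy).symm

/-- Apply `∂₀` to the commutation of `(s₀ h)⁻¹ (s₁ h) ∈ ker ∂₁` with `s₀ h' ∈ ker ∂₂`. -/
theorem peiffer_of_N_two_eq_bot (hN : X.N 2 = ⊥) (h : X.G 1) {h' : X.G 1}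
    (hh' : X.d 0 1 h' = 1) :
    X.s 0 0 (X.d 0 0 h) * h' * (X.s 0 0 (X.d 0 0 h))⁻¹ = h * h' * h⁻¹ := by
  have hx : X.d 1 1 ((X.s 1 0 h)⁻¹ * X.s 1 1 h) = 1 := by
    simp
  have hy : X.d 1 2 (X.s 1 0 h') = 1 := by
    rw [X.d_succ_s_of_lt zero_lt_one le_rfl, hh', map_one]
  have hcomm := congrArg (X.d 1 0) (X.commute_of_N_two_eq_bot hN hx hy).eq
  simp only [map_mul, map_inv, X.d_s_self (n := 1) zero_le_one,
    X.d_s_succ_of_le le_rfl le_rfl] at hcomm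
  rw [mul_inv_eq_iff_eq_mul]
  simp only [mul_assoc] at hcomm ⊢
  rw [← hcomm, mul_inv_cancel_left]

theorem d_s_self_conj {n j : ℕ} (hj : j ≤ n) (g : X.G n) (h : X.G (n + 1)) :
    X.d n j (X.s n j g * h * (X.s n j g)⁻¹) = g * X.d n j h * g⁻¹ := by
  simp [hj]

end SimplicialGroup

/-- if the Moore complex of `G` has length 1 (`NG_2` trivial), then
`(NG_1, G_0, δ_1 = ∂₀|_{NG_1},` action by `s₀`-conjugation`)` is a crossed module:
the action of `G_0` preserves `NG_1`, the Peiffer condition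
`s₀(∂₀h) h' s₀(∂₀h)⁻¹ = h h' h⁻¹` holds on `NG_1`, and the equivariance
`∂₀(s₀(g) h s₀(g)⁻¹) = g (∂₀h) g⁻¹` holds. -/
theorem length_one_gives_crossed_module (X : SimplicialGroup) (hlen : X.N 2 = ⊥) :
    (∀ (g : X.G 0), ∀ h ∈ X.N 1, X.s 0 0 g * h * (X.s 0 0 g)⁻¹ ∈ X.N 1) ∧
    (∀ h ∈ X.N 1, ∀ h' ∈ X.N 1,
      X.s 0 0 (X.d 0 0 h) * h' * (X.s 0 0 (X.d 0 0 h))⁻¹ = h * h' * h⁻¹) ∧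
    (∀ (g : X.G 0), ∀ h ∈ X.N 1,
      X.d 0 0 (X.s 0 0 g * h * (X.s 0 0 g)⁻¹) = g * X.d 0 0 h * g⁻¹) := by
  refine ⟨fun g h hh => (X.N_normal 1).conj_mem h hh _, fun h _ h' hh' =>
    X.peiffer_of_N_two_eq_bot hlen h (X.mem_N_one.mp hh'),
    fun g h _ => X.d_s_self_conj le_rfl g h⟩
end

section
/- Let G be a simplicial group, X a simplicial set, and τ a twisting function for G over X. Define f_τ : X → W̄G by f_τ(x) = * for x ∈ X_0 and f_τ(x) = (τ(x), τ(∂_0 x), τ(∂_0^2 x), …, τ(∂_0^{n-1} x)) for x ∈ X_n, n > 0. Then f_τ is a simplicial map (it commutes with all face and degeneracy maps of X and W̄G), and the twisting extracted from f_τ by taking the first component returns τ: τ_{f_τ} = τ. -/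
/-- A simplicial set: a family of types `X n` with face maps `d n i : X (n+1) → X n`
(for `i ≤ n+1`) and degeneracy maps `s n i : X n → X (n+1)` (for `i ≤ n`)
satisfying the simplicial identities. -/
structure SSet' where
  X : ℕ → Type
  d : ∀ n : ℕ, ℕ → X (n+1) → X n
  s : ∀ n : ℕ, ℕ → X n → X (n+1)
  dd : ∀ (n i j : ℕ), i ≤ j → j ≤ n + 1 → ∀ x : X (n+2),
    d n i (d (n+1) (j+1) x) = d n j (d (n+1) i x)
  ss : ∀ (n i j : ℕ), i ≤ j → j ≤ n → ∀ x : X n,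
    s (n+1) i (s n j x) = s (n+1) (j+1) (s n i x)
  ds_lt : ∀ (n i j : ℕ), i ≤ j → j ≤ n → ∀ x : X (n+1),
    d (n+1) i (s (n+1) (j+1) x) = s n j (d n i x)
  ds_self : ∀ (n j : ℕ), j ≤ n → ∀ x : X n, d n j (s n j x) = x
  ds_succ : ∀ (n j : ℕ), j ≤ n → ∀ x : X n, d n (j+1) (s n j x) = x
  ds_gt : ∀ (n i j : ℕ), j < i → i ≤ n + 1 → ∀ x : X (n+1),
    d (n+1) (i+1) (s (n+1) j x) = s n j (d n i x)

/-- `τ` is a twisting function for the simplicial group `G` over the simplicial data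
`(Y, dY, sY)`: `τ n : Y (n+1) → G n` satisfies
`∂₀τ(x)·τ(∂₀x) = τ(∂₁x)`, `∂ᵢτ(x) = τ(∂_{i+1}x)` for `i > 0`,
`sᵢτ(x) = τ(s_{i+1}x)` for `i ≥ 0`, and `τ(s₀x) = e`. -/
def IsTwistingData (G : SimplicialGroup) (Y : ℕ → Type)
    (dY : ∀ n : ℕ, ℕ → Y (n+1) → Y n) (sY : ∀ n : ℕ, ℕ → Y n → Y (n+1))
    (τ : ∀ n, Y (n+1) → G.G n) : Prop :=
  (∀ (n : ℕ) (x : Y (n+2)),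
      G.d n 0 (τ (n+1) x) * τ n (dY (n+1) 0 x) = τ n (dY (n+1) 1 x)) ∧
  (∀ (n i : ℕ), i ≤ n → ∀ x : Y (n+2),
      G.d n (i+1) (τ (n+1) x) = τ n (dY (n+1) (i+2) x)) ∧
  (∀ (n i : ℕ), i ≤ n → ∀ x : Y (n+1),
      G.s n i (τ n x) = τ (n+1) (sY (n+1) (i+1) x)) ∧
  (∀ (n : ℕ) (x : Y n), τ n (sY n 0 x) = 1)

/-- Face maps of the twisted Cartesian product `G ×_τ Y`:
`∂ᵢ(g,x) = (∂ᵢg, ∂ᵢx)` for `i > 0` and `∂₀(g,x) = (∂₀g · τ(x), ∂₀x)`. -/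
def TPd (G : SimplicialGroup) (Y : ℕ → Type) (dY : ∀ n : ℕ, ℕ → Y (n+1) → Y n)
    (τ : ∀ n, Y (n+1) → G.G n) (n : ℕ) :
    ℕ → G.G (n+1) × Y (n+1) → G.G n × Y n
  | 0, p => (G.d n 0 p.1 * τ n p.2, dY n 0 p.2)
  | (k+1), p => (G.d n (k+1) p.1, dY n (k+1) p.2)

/-- Degeneracy maps of the twisted Cartesian product: `sᵢ(g,x) = (sᵢg, sᵢx)`. -/
def TPs (G : SimplicialGroup) (Y : ℕ → Type) (sY : ∀ n : ℕ, ℕ → Y n → Y (n+1))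
    (n k : ℕ) (p : G.G n × Y n) : G.G (n+1) × Y (n+1) :=
  (G.s n k p.1, sY n k p.2)

/-- The `n`-simplices of the classifying space `W̄G`: tuples `(g_{n-1}, …, g_0)` with
`g_j ∈ G_j`, encoded as dependent functions (`W̄G_0` is a one-element type). -/
def WbarObj (G : SimplicialGroup) (n : ℕ) : Type := ∀ j : Fin n, G.G j.val

/-- Face maps of `W̄G`: `∂₀(g_n,…,g_0) = (g_{n-1},…,g_0)` and
`∂_{i+1}(g_n,…,g_0) = (∂ᵢg_n, …, ∂₁g_{n-i+1}, ∂₀g_{n-i}·g_{n-i-1}, g_{n-i-2}, …, g_0)`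
(the last face being `∂_{n+1}(g_n,…,g_0) = (∂_ng_n,…,∂₁g_1)`), written componentwise. -/
def Wd (G : SimplicialGroup) (n k : ℕ) (w : WbarObj G (n+1)) : WbarObj G n :=
  fun j =>
    if h1 : j.val + k < n then w ⟨j.val, by omega⟩
    else if h2 : j.val + k = n then
      G.d j.val 0 (w ⟨j.val + 1, by have := j.isLt; omega⟩) * w ⟨j.val, by have := j.isLt; omega⟩
    else G.d j.val (j.val + k - n) (w ⟨j.val + 1, by have := j.isLt; omega⟩)

/-- Degeneracy maps of `W̄G`: `s₀(g_{n-1},…,g_0) = (e_n, g_{n-1},…,g_0)` and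
`s_{i+1}(g_{n-1},…,g_0) = (sᵢg_{n-1}, …, s₀g_{n-i-1}, e_{n-i-1}, g_{n-i-2}, …, g_0)`,
written componentwise. -/
def Ws (G : SimplicialGroup) (n k : ℕ) (w : WbarObj G n) : WbarObj G (n+1) :=
  fun j =>
    if h1 : j.val + k < n then w ⟨j.val, by omega⟩
    else if h2 : j.val + k = n then 1
    else
      match j with
      | ⟨0, _⟩ => 1
      | ⟨m+1, hm⟩ => if h : m < n then G.s m (m + 1 + k - n - 1) (w ⟨m, h⟩) else 1

/-- The universal twisting `τ̄(g_{n-1},…,g_0) = g_{n-1}` on `W̄G`. -/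
def Wtau (G : SimplicialGroup) (n : ℕ) (w : WbarObj G (n+1)) : G.G n :=
  w ⟨n, Nat.lt_succ_self n⟩

/-- The iterated zeroth face map `∂₀^r : X_{n+r} → X_n`. -/
def d0iter (Y : SSet') : (r n : ℕ) → Y.X (n + r) → Y.X n
  | 0, _, x => x
  | (r+1), n, x => d0iter Y r n (Y.d (n + r) 0 x)

/-- The simplicial map `f_τ : X → W̄G` associated to a twisting `τ`:
`f_τ(x) = (τ(x), τ(∂₀x), …, τ(∂₀^{n-1}x))` for `x ∈ X_n`. -/
def fTau (G : SimplicialGroup) (Y : SSet') (τ : ∀ n, Y.X (n+1) → G.G n) (n : ℕ)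
    (x : Y.X n) : WbarObj G n :=
  fun j => τ j.val (d0iter Y (n - 1 - j.val) (j.val + 1)
    ((show Y.X n = Y.X (j.val + 1 + (n - 1 - j.val)) by
        have := j.isLt; congr 1; omega) ▸ x))

/-! Component `j` of `f_τ(x)` is `τ(∂₀^r x)`, where `∂₀^r x ∈ X_{j+1}`. The simplicial
identities move a face `∂_k` or a degeneracy `s_k` past `∂₀^r`: for `k ≤ r` it is absorbed
(`∂₀^r ∂_k = ∂₀^{r+1}`, `∂₀^{r+1} s_k = ∂₀^r`), and otherwise it reappears on the far side as
`∂_{k-r}` resp. `s_{k-r}`. Absorption gives the entries of `W̄G` that `∂_k`, `s_k` leave untouched;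
in the other entries the twisting identities turn `τ ∂_{k-r}` into `∂_{k-r-1} τ`, or into
`∂₀τ · τ∂₀` when `k - r = 1`, and `τ s_{k-r}` into `s_{k-r-1} τ`, or into `e` when `k = r`. -/

namespace SSet'

def castDim (Y : SSet') {a b : ℕ} (h : a = b) (x : Y.X a) : Y.X b :=
  cast (congrArg Y.X h) x

theorem castDim_face {Y : SSet'} {a b : ℕ} (h : a + 1 = b + 1) (h' : a = b) (i : ℕ)
    (x : Y.X (a + 1)) :
    Y.d b i (Y.castDim h x) = Y.castDim h' (Y.d a i x) := by
  subst h'; rfl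

end SSet'

/- The lemmas on `d0iter` take the source dimension `a` as a variable together with an equation,
so that they apply directly to the transported arguments produced by `fTau`. -/

section D0iter

variable {Y : SSet'}

theorem d0iter_congr {m r r' a : ℕ} (h : a = m + r) (h' : a = m + r') (x : Y.X a) :
    d0iter Y r m (Y.castDim h x) = d0iter Y r' m (Y.castDim h' x) := by
  obtain rfl : r = r' := by omega
  rfl

theorem d0iter_face_of_le {m r k a : ℕ} (hk : k ≤ r) (x : Y.X (a + 1)) (h : a = m + r)
    (h' : a + 1 = m + (r + 1)) :
    d0iter Y r m (Y.castDim h (Y.d a k x)) = d0iter Y (r + 1) m (Y.castDim h' x) := by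
  subst h
  induction r generalizing k with
  | zero =>
    obtain rfl : k = 0 := by omega
    rfl
  | succ r ih =>
    cases k with
    | zero => rfl
    | succ k =>
      change d0iter Y r m (Y.d (m + r) 0 (Y.d (m + r + 1) (k + 1) x)) =
        d0iter Y (r + 1) m (Y.d (m + (r + 1)) 0 x)
      rw [Y.dd (m + r) 0 k k.zero_le (by omega) x]
      exact ih (by omega) (Y.d (m + r + 1) 0 x) rfl

theorem face_d0iter {m r q a : ℕ} (hq : q ≤ m + 1) (x : Y.X (a + 1)) (h : a + 1 = m + 1 + r)
    (h' : a = m + r) :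
    Y.d m q (d0iter Y r (m + 1) (Y.castDim h x)) =
      d0iter Y r m (Y.castDim h' (Y.d a (q + r) x)) := by
  subst h'
  induction r with
  | zero => rfl
  | succ r ih =>
    change Y.d m q (d0iter Y r (m + 1) (Y.d (m + 1 + r) 0 (Y.castDim h x))) =
      d0iter Y r m (Y.d (m + r) 0 (Y.d (m + r + 1) (q + r + 1) x))
    rw [SSet'.castDim_face (a := m + r + 1) (b := m + 1 + r) h (by omega),
      ih (Y.d (m + r + 1) 0 x) (by omega), ← Y.dd (m + r) 0 (q + r) (Nat.zero_le _) (by omega) x]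
    rfl

theorem d0iter_succ_eq_face_zero {m r a : ℕ} (x : Y.X a) (h : a = m + (r + 1))
    (h' : a = m + 1 + r) :
    d0iter Y (r + 1) m (Y.castDim h x) = Y.d m 0 (d0iter Y r (m + 1) (Y.castDim h' x)) := by
  subst h
  rw [face_d0iter (Nat.zero_le _) x h' rfl, zero_add, d0iter_face_of_le le_rfl x rfl rfl]

theorem d0iter_degeneracy_of_le {m r k a : ℕ} (hk : k ≤ r) (x : Y.X a) (h : a = m + r)
    (h' : a + 1 = m + (r + 1)) :
    d0iter Y (r + 1) m (Y.castDim h' (Y.s a k x)) = d0iter Y r m (Y.castDim h x) := by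
  subst h
  induction r generalizing k with
  | zero =>
    obtain rfl : k = 0 := by omega
    exact Y.ds_self m 0 m.zero_le x
  | succ r ih =>
    cases k with
    | zero => exact congrArg (d0iter Y (r + 1) m) (Y.ds_self _ 0 (Nat.zero_le _) x)
    | succ k =>
      change d0iter Y (r + 1) m (Y.d (m + r + 1) 0 (Y.s (m + r + 1) (k + 1) x)) =
        d0iter Y r m (Y.d (m + r) 0 x)
      rw [Y.ds_lt (m + r) 0 k k.zero_le (by omega) x]
      exact ih (by omega) (Y.d (m + r) 0 x) rfl

theorem d0iter_degeneracy {m r q a : ℕ} (hq : q ≤ m) (x : Y.X a) (h : a = m + r)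
    (h' : a + 1 = m + 1 + r) :
    d0iter Y r (m + 1) (Y.castDim h' (Y.s a (q + r) x)) =
      Y.s m q (d0iter Y r m (Y.castDim h x)) := by
  subst h
  induction r with
  | zero => rfl
  | succ r ih =>
    change d0iter Y r (m + 1)
        (Y.d (m + 1 + r) 0 (Y.castDim h' (Y.s (m + r + 1) (q + r + 1) x))) =
      Y.s m q (d0iter Y r m (Y.d (m + r) 0 x))
    rw [SSet'.castDim_face (a := m + r + 1) (b := m + 1 + r) h' (by omega),
      Y.ds_lt (m + r) 0 (q + r) (Nat.zero_le _) (by omega) x]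
    exact ih (Y.d (m + r) 0 x) (by omega)

end D0iter

section Wbar

variable {G : SimplicialGroup} {n k j : ℕ}

theorem Wd_apply_of_lt (w : WbarObj G (n + 1)) (hj : j < n) (h : j + k < n) :
    Wd G n k w ⟨j, hj⟩ = w ⟨j, by omega⟩ :=
  dif_pos h

theorem Wd_apply_of_eq (w : WbarObj G (n + 1)) (hj : j < n) (h : j + k = n) :
    Wd G n k w ⟨j, hj⟩ = G.d j 0 (w ⟨j + 1, by omega⟩) * w ⟨j, by omega⟩ := by
  simp only [Wd]
  rw [dif_neg (by omega), dif_pos h]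

theorem Wd_apply_of_gt (w : WbarObj G (n + 1)) (hj : j < n) (h : n < j + k) :
    Wd G n k w ⟨j, hj⟩ = G.d j (j + k - n) (w ⟨j + 1, by omega⟩) := by
  simp only [Wd]
  rw [dif_neg (by omega), dif_neg (by omega)]

theorem Ws_apply_of_lt (w : WbarObj G n) (hj : j < n + 1) (h : j + k < n) :
    Ws G n k w ⟨j, hj⟩ = w ⟨j, by omega⟩ :=
  dif_pos h

theorem Ws_apply_of_eq (w : WbarObj G n) (hj : j < n + 1) (h : j + k = n) :
    Ws G n k w ⟨j, hj⟩ = 1 := by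
  simp only [Ws]
  rw [dif_neg (by omega), dif_pos h]

theorem Ws_apply_succ_of_gt (w : WbarObj G n) (hj : j + 1 < n + 1) (h : n < j + 1 + k) :
    Ws G n k w ⟨j + 1, hj⟩ = G.s j (j + 1 + k - n - 1) (w ⟨j, by omega⟩) := by
  simp only [Ws]
  rw [dif_neg (by omega), dif_neg (by omega), dif_pos (by omega)]

end Wbar

section FTau

variable {G : SimplicialGroup} {Y : SSet'} {τ : ∀ n, Y.X (n + 1) → G.G n}

theorem fTau_apply {n j r : ℕ} (hj : j < n) (h : n = j + 1 + r) (x : Y.X n) :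
    fTau G Y τ n x ⟨j, hj⟩ = τ j (d0iter Y r (j + 1) (Y.castDim h x)) :=
  congrArg (τ j) (d0iter_congr (by dsimp only; omega) h x)

theorem fTau_face (hτ : IsTwistingData G Y.X Y.d Y.s τ) {n k : ℕ} (hk : k ≤ n + 1)
    (x : Y.X (n + 1)) : fTau G Y τ n (Y.d n k x) = Wd G n k (fTau G Y τ (n + 1) x) := by
  obtain ⟨hτ_d0, hτ_d, -, -⟩ := hτ
  funext ⟨j, hj⟩
  obtain ⟨r, hr⟩ : ∃ r, n = j + 1 + r := ⟨n - 1 - j, by omega⟩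
  have hr' : n + 1 = j + 1 + 1 + r := by omega
  rw [fTau_apply hj hr]
  rcases lt_trichotomy (j + k) n with hlt | heq | hgt
  · rw [Wd_apply_of_lt _ hj hlt, fTau_apply _ (by omega : n + 1 = j + 1 + (r + 1)),
      d0iter_face_of_le (by omega) x hr]
  · obtain rfl : k = 1 + r := by omega
    rw [Wd_apply_of_eq _ hj heq, fTau_apply _ hr',
      fTau_apply _ (by omega : n + 1 = j + 1 + (r + 1)), d0iter_succ_eq_face_zero x _ hr', hτ_d0,
      face_d0iter (by omega) x hr' hr]
  · obtain ⟨i, rfl⟩ : ∃ i, k = i + 2 + r := ⟨k - 2 - r, by omega⟩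
    rw [Wd_apply_of_gt _ hj hgt, fTau_apply _ hr', show j + (i + 2 + r) - n = i + 1 by omega,
      hτ_d j i (by omega), face_d0iter (by omega) x hr' hr]

theorem fTau_degeneracy (hτ : IsTwistingData G Y.X Y.d Y.s τ) {n k : ℕ} (hk : k ≤ n)
    (x : Y.X n) : fTau G Y τ (n + 1) (Y.s n k x) = Ws G n k (fTau G Y τ n x) := by
  obtain ⟨-, -, hτ_s, hτ_s0⟩ := hτ
  funext ⟨j, hj⟩
  rcases lt_trichotomy (j + k) n with hlt | heq | hgt
  · obtain ⟨r, hr⟩ : ∃ r, n = j + 1 + r := ⟨n - 1 - j, by omega⟩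
    rw [Ws_apply_of_lt _ hj hlt, fTau_apply _ (by omega : n + 1 = j + 1 + (r + 1)),
      fTau_apply _ hr, d0iter_degeneracy_of_le (by omega) x hr]
  · have hs := d0iter_degeneracy (q := 0) j.zero_le x heq.symm (by omega)
    rw [zero_add] at hs
    rw [Ws_apply_of_eq _ hj heq, fTau_apply _ (by omega : n + 1 = j + 1 + k), hs, hτ_s0]
  · obtain ⟨m, rfl⟩ : ∃ m, j = m + 1 := ⟨j - 1, by omega⟩
    obtain ⟨r, hr⟩ : ∃ r, n = m + 1 + r := ⟨n - 1 - m, by omega⟩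
    obtain ⟨i, rfl⟩ : ∃ i, k = i + 1 + r := ⟨k - 1 - r, by omega⟩
    rw [Ws_apply_succ_of_gt _ hj hgt, fTau_apply _ (by omega : n + 1 = m + 1 + 1 + r),
      fTau_apply _ hr, show m + 1 + (i + 1 + r) - n - 1 = i by omega, hτ_s m i (by omega),
      d0iter_degeneracy (by omega) x hr]

end FTau

/-- for a twisting `τ`, the map
`f_τ(x) = (τ(x), τ(∂₀x), …, τ(∂₀^{n-1}x))` is a simplicial map `X → W̄G`
(it commutes with all faces and degeneracies), and extracting the top component of
`f_τ` returns `τ`: `τ_{f_τ} = τ`. -/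
theorem fTau_simplicial_and_roundtrip (G : SimplicialGroup) (Y : SSet')
    (τ : ∀ n, Y.X (n+1) → G.G n) (hτ : IsTwistingData G Y.X Y.d Y.s τ) :
    (∀ (n k : ℕ), k ≤ n + 1 → ∀ x : Y.X (n+1),
        fTau G Y τ n (Y.d n k x) = Wd G n k (fTau G Y τ (n+1) x)) ∧
    (∀ (n k : ℕ), k ≤ n → ∀ x : Y.X n,
        fTau G Y τ (n+1) (Y.s n k x) = Ws G n k (fTau G Y τ n x)) ∧
    (∀ (n : ℕ) (x : Y.X (n+1)),
        fTau G Y τ (n+1) x ⟨n, Nat.lt_succ_self n⟩ = τ n x) :=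
  ⟨fun _ _ hk x => fTau_face hτ hk x, fun _ _ hk x => fTau_degeneracy hτ hk x,
    fun n x => fTau_apply (r := 0) n.lt_succ_self rfl x⟩
end
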